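/- Let ℓ ≥ 0 be an integer, define δ ∈ ℤ^I by δ_{(i,j)} = j − 1, and for σ = (i,j) ∈ I set r_σ = ℓ·(e + (j−1)(p−1)) + (e(e−1) + (j−1)(j−2)(p−1))/2. Then each r_σ is a non-negative integer and Σ_{σ∈I} r_σ·h_σ = (p−1)·(ℓ·𝟙 + δ), where 𝟙 ∈ ℤ^I is the all-ones vector. (This is the explicit expression, used in the paper's construction of Galois representations, of the multiple (p−1)(ℓ·𝟙+δ) of an ample weight as a non-negative integral combination of partial Hasse invariant weights.) -/

import Mathlib

open scoped BigOperators

/-- The index set `I = (ℤ/fℤ) × {1,…,e}` of embeddings, with the second factor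
0-indexed: `(i, j) : Idx e f` corresponds to the pair `(i, j+1)` of the paper. -/
abbrev Idx (e f : ℕ) := ZMod f × Fin e

/-- `ν_σ = p` if `σ = (i,1)` (i.e. the 0-indexed second component is `0`),
and `ν_σ = 1` otherwise. -/
def nu (p e f : ℕ) (σ : Idx e f) : ℤ := if (σ.2 : ℕ) = 0 then (p : ℤ) else 1

/-- The cyclic permutation `φ` of `I`: `φ(i,j) = (i,j+1)` for `j < e` and
`φ(i,e) = (i+1,1)` (in the paper's 1-indexed notation). -/
def phi (e f : ℕ) (σ : Idx e f) : Idx e f :=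
  if h : (σ.2 : ℕ) + 1 < e then (σ.1, ⟨(σ.2 : ℕ) + 1, h⟩)
  else (σ.1 + 1, ⟨0, σ.2.pos⟩)

/-- The inverse `φ⁻¹` of the cyclic permutation `φ`, given by its explicit
formula: `φ⁻¹(i,j) = (i,j-1)` for `j > 1` and `φ⁻¹(i,1) = (i-1,e)`
(in the paper's 1-indexed notation). -/
def phiInv (e f : ℕ) (σ : Idx e f) : Idx e f :=
  if (σ.2 : ℕ) = 0 then (σ.1 - 1, ⟨e - 1, Nat.sub_lt σ.2.pos one_pos⟩)
  else (σ.1, ⟨(σ.2 : ℕ) - 1, lt_of_le_of_lt (Nat.sub_le _ 1) σ.2.isLt⟩)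

/-- The partial Hasse invariant weight vector `h_σ = ν_σ·𝐞_{φ⁻¹(σ)} − 𝐞_σ ∈ ℤ^I`. -/
def hvec (p e f : ℕ) (σ : Idx e f) : Idx e f → ℤ :=
  fun ρ => nu p e f σ * (if ρ = phiInv e f σ then 1 else 0) - (if ρ = σ then 1 else 0)

/-- The minimal cone `Ξ_min = { k ∈ ℤ^I : ν_σ·k_σ ≥ k_{φ⁻¹(σ)} for all σ ∈ I }`. -/
def XiMin (p e f : ℕ) : Set (Idx e f → ℤ) :=
  {k | ∀ σ : Idx e f, k (phiInv e f σ) ≤ nu p e f σ * k σ}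

/-- The coefficient `r_σ = ℓ·(e + (j−1)(p−1)) + (e(e−1) + (j−1)(j−2)(p−1))/2`
for `σ = (i,j) ∈ I` (here the second component of `σ` is 0-indexed, so it equals
the paper's `j − 1`); the division is integer division, which is exact. -/
def rcoef (p e f ℓ : ℕ) (σ : Idx e f) : ℤ :=
  (ℓ : ℤ) * ((e : ℤ) + (σ.2 : ℤ) * ((p : ℤ) - 1)) +
    ((e : ℤ) * ((e : ℤ) - 1) + (σ.2 : ℤ) * ((σ.2 : ℤ) - 1) * ((p : ℤ) - 1)) / 2

/-!
Since `φ⁻¹` is a bijection, the `ρ`-component of `Σ_σ c_σ h_σ` is `ν_{φ(ρ)} c_{φ(ρ)} − c_ρ` for any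
coefficients `c`. Clearing the (exact) division by `2` in `r`, the identity becomes a polynomial
identity in each of the two cases `φ(i,j) = (i,j+1)` and `φ(i,e) = (i+1,1)`.
-/

lemma phiInv_phi (e f : ℕ) (ρ : Idx e f) : phiInv e f (phi e f ρ) = ρ := by
  by_cases h : (ρ.2 : ℕ) + 1 < e
  · refine Prod.ext ?_ (Fin.ext ?_) <;> simp [phi, phiInv, h]
  · have hv : (ρ.2 : ℕ) = e - 1 := by have := ρ.2.isLt; omega
    simp only [phi, dif_neg h]
    refine Prod.ext ?_ (Fin.ext ?_) <;> simp [phiInv]; omega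

lemma phi_phiInv (e f : ℕ) (σ : Idx e f) : phi e f (phiInv e f σ) = σ := by
  by_cases h : (σ.2 : ℕ) = 0
  · have h2 : ¬ (e - 1 + 1 < e) := by have := σ.2.pos; omega
    refine Prod.ext ?_ (Fin.ext ?_) <;> simp [phi, phiInv, h, h2]
  · have h3 : (σ.2 : ℕ) - 1 + 1 < e := by have := σ.2.isLt; omega
    refine Prod.ext ?_ (Fin.ext ?_) <;> simp [phi, phiInv, h, h3]; omega

lemma eq_phiInv_iff {e f : ℕ} {ρ σ : Idx e f} : ρ = phiInv e f σ ↔ phi e f ρ = σ := by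
  constructor
  · rintro rfl; exact phi_phiInv e f σ
  · rintro rfl; exact (phiInv_phi e f ρ).symm

lemma sum_mul_hvec_apply (p e f : ℕ) [NeZero f] (c : Idx e f → ℤ) (ρ : Idx e f) :
    ∑ σ : Idx e f, c σ * hvec p e f σ ρ = nu p e f (phi e f ρ) * c (phi e f ρ) - c ρ := by
  simp only [hvec, eq_phiInv_iff, mul_sub, mul_ite, mul_one, mul_zero, Finset.sum_sub_distrib,
    Finset.sum_ite_eq, Finset.mem_univ, if_true]
  ring

lemma two_dvd_rcoef_numerator (p e j : ℤ) : 2 ∣ e * (e - 1) + j * (j - 1) * (p - 1) :=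
  dvd_add (Int.even_mul_pred_self e).two_dvd ((Int.even_mul_pred_self j).two_dvd.mul_right _)

lemma two_mul_rcoef (p e f ℓ : ℕ) (σ : Idx e f) :
    2 * rcoef p e f ℓ σ = 2 * ℓ * (e + σ.2 * (p - 1)) + (e * (e - 1) + σ.2 * (σ.2 - 1) * (p - 1)) := by
  rw [rcoef, mul_add, Int.mul_ediv_cancel' (two_dvd_rcoef_numerator _ _ _)]
  ring

lemma Int.mul_sub_one_nonneg (n : ℤ) : 0 ≤ n * (n - 1) := by
  rcases le_or_gt n 0 with h | h
  · exact mul_nonneg_of_nonpos_of_nonpos h (by linarith)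
  · exact mul_nonneg h.le (by linarith)

lemma rcoef_nonneg {p : ℕ} (hp : 1 ≤ p) (e f ℓ : ℕ) (σ : Idx e f) : 0 ≤ rcoef p e f ℓ σ := by
  have hp' : (0 : ℤ) ≤ p - 1 := by omega
  have := two_mul_rcoef p e f ℓ σ
  have := Int.mul_sub_one_nonneg e
  have := mul_nonneg (Int.mul_sub_one_nonneg (σ.2 : ℤ)) hp'
  have : (0 : ℤ) ≤ 2 * ℓ * (e + σ.2 * (p - 1)) := by positivity
  linarith

lemma nu_phi_mul_rcoef_phi_sub (p e f ℓ : ℕ) (ρ : Idx e f) :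
    nu p e f (phi e f ρ) * rcoef p e f ℓ (phi e f ρ) - rcoef p e f ℓ ρ
      = (p - 1) * (ℓ + ρ.2) := by
  have hρ := two_mul_rcoef p e f ℓ ρ
  have hφρ := two_mul_rcoef p e f ℓ (phi e f ρ)
  refine mul_left_cancel₀ (two_ne_zero (α := ℤ)) ?_
  by_cases h : (ρ.2 : ℕ) + 1 < e
  · simp only [phi, dif_pos h, nu, Nat.add_one_ne_zero, if_false] at hφρ ⊢
    push_cast at hφρ
    linear_combination hφρ - hρ
  · have hlast : (ρ.2 : ℤ) = e - 1 := by have := ρ.2.isLt; omega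
    simp only [phi, dif_neg h, nu, if_true] at hφρ ⊢
    push_cast at hφρ
    rw [hlast] at hρ ⊢
    linear_combination (p : ℤ) * hφρ - hρ

theorem rcoef_spec_general (p e f ℓ : ℕ) (hp : p.Prime) [NeZero f] :
    (∀ σ : Idx e f,
        (2 : ℤ) ∣ ((e : ℤ) * ((e : ℤ) - 1) + (σ.2 : ℤ) * ((σ.2 : ℤ) - 1) * ((p : ℤ) - 1))) ∧
    (∀ σ : Idx e f, 0 ≤ rcoef p e f ℓ σ) ∧
    (∀ ρ : Idx e f, ∑ σ : Idx e f, rcoef p e f ℓ σ * hvec p e f σ ρ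
        = ((p : ℤ) - 1) * ((ℓ : ℤ) + (ρ.2 : ℤ))) :=
  ⟨fun _ => two_dvd_rcoef_numerator _ _ _, rcoef_nonneg hp.one_le e f ℓ,
    fun ρ => (sum_mul_hvec_apply p e f _ ρ).trans (nu_phi_mul_rcoef_phi_sub p e f ℓ ρ)⟩

/-- With `δ ∈ ℤ^I` given by `δ_{(i,j)} = j − 1`, each `r_σ` is a non-negative integer
(the division by `2` in its definition being exact) and
`Σ_{σ∈I} r_σ·h_σ = (p−1)·(ℓ·𝟙 + δ)`. -/
theorem rcoef_spec (p e f ℓ : ℕ) (hp : p.Prime) (he : 0 < e) [NeZero f] :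
    (∀ σ : Idx e f,
        (2 : ℤ) ∣ ((e : ℤ) * ((e : ℤ) - 1) + (σ.2 : ℤ) * ((σ.2 : ℤ) - 1) * ((p : ℤ) - 1))) ∧
    (∀ σ : Idx e f, 0 ≤ rcoef p e f ℓ σ) ∧
    (∀ ρ : Idx e f, ∑ σ : Idx e f, rcoef p e f ℓ σ * hvec p e f σ ρ
        = ((p : ℤ) - 1) * ((ℓ : ℤ) + (ρ.2 : ℤ))) :=
  rcoef_spec_general p e f ℓ hp
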